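/- arXiv:1909.04285 — 9 statements merged into one kernel-verified Lean document; each statement's English description precedes it below -/
import Mathlib

section
/- Let {x⁽ⁿ⁾} be a sequence in S_r (nonnegative sequences in ℓ¹ with norm exactly r) and a ∈ S_r. Then x⁽ⁿ⁾ converges to a in ℓ¹-norm if and only if x⁽ⁿ⁾ converges to a pointwise (coordinatewise). -/
open Filter Topology

theorem stmt_4 (r : ℝ) (hr : 0 < r) (x : ℕ → ℕ → ℝ) (a : ℕ → ℝ)
    (hx : ∀ n, (∀ k, 0 ≤ x n k) ∧ Summable (x n) ∧ ∑' k, x n k = r)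
    (ha : (∀ k, 0 ≤ a k) ∧ Summable a ∧ ∑' k, a k = r) :
    Tendsto (fun n => ∑' k, |x n k - a k|) atTop (𝓝 0) ↔
      ∀ k, Tendsto (fun n => x n k) atTop (𝓝 (a k)) := by
  obtain ⟨ha0, haS, har⟩ := ha
  have hdiffS : ∀ n, Summable (fun k => |x n k - a k|) := fun n =>
    (((hx n).2.1.sub haS).abs)
  constructor
  · intro h k
    have hk : ∀ n, |x n k - a k| ≤ ∑' j, |x n j - a j| := fun n =>
      Summable.le_tsum (hdiffS n) k (fun j _ => abs_nonneg _)
    have : Tendsto (fun n => |x n k - a k|) atTop (𝓝 0) := by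
      refine squeeze_zero (fun n => abs_nonneg _) hk h
    have := this.sub_const 0
    rw [← tendsto_sub_nhds_zero_iff]
    simpa [abs_sub_comm] using tendsto_zero_iff_abs_tendsto_zero (fun n => x n k - a k) |>.mpr
      (by simpa [Function.comp_def] using this)
  · intro h
    -- min trick: |x - a| = x + a - 2 * min x a
    have hminS : ∀ n, Summable (fun k => min (x n k) (a k)) := by
      intro n
      refine haS.of_nonneg_of_le (fun k => le_min ((hx n).1 k) (ha0 k)) (fun k => min_le_right _ _)
    have hmin_t : Tendsto (fun n => ∑' k, min (x n k) (a k)) atTop (𝓝 (∑' k, a k)) := by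
      refine tendsto_tsum_of_dominated_convergence haS (fun k => ?_) ?_
      · have : Tendsto (fun n => min (x n k) (a k)) atTop (𝓝 (min (a k) (a k))) :=
          (h k).min tendsto_const_nhds
        simpa using this
      · refine Eventually.of_forall (fun n k => ?_)
        rw [Real.norm_eq_abs, abs_of_nonneg (le_min ((hx n).1 k) (ha0 k))]
        exact min_le_right _ _
    have key : ∀ n, ∑' k, |x n k - a k| = r + r - 2 * ∑' k, min (x n k) (a k) := by
      intro n
      have heq : ∀ k, |x n k - a k| = x n k + a k - 2 * min (x n k) (a k) := by
        intro k
        rcases le_total (x n k) (a k) with hle | hle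
        · rw [abs_of_nonpos (by linarith), min_eq_left hle]; ring
        · rw [abs_of_nonneg (by linarith), min_eq_right hle]; ring
      calc ∑' k, |x n k - a k| = ∑' k, (x n k + a k - 2 * min (x n k) (a k)) := by
            exact tsum_congr heq
        _ = (∑' k, (x n k + a k)) - ∑' k, 2 * min (x n k) (a k) := by
            exact Summable.tsum_sub ((hx n).2.1.add haS) ((hminS n).mul_left 2)
        _ = r + r - 2 * ∑' k, min (x n k) (a k) := by
            rw [Summable.tsum_add (hx n).2.1 haS, (hx n).2.2, har, tsum_mul_left]
    have : Tendsto (fun n => r + r - 2 * ∑' k, min (x n k) (a k)) atTop (𝓝 0) := by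
      have h2 : Tendsto (fun n => 2 * ∑' k, min (x n k) (a k)) atTop (𝓝 (2 * r)) := by
        simpa [har] using hmin_t.const_mul 2
      have := (tendsto_const_nhds (x := r + r) (f := atTop (α := ℕ))).sub h2
      simpa [two_mul] using this
    simpa [key] using this
end

section
/- Let b ∈ ℓ^∞ and define φ_b(x) = Σ b_k x_k on ℓ¹. Then φ_b is sequentially continuous with respect to pointwise convergence on B₁⁺ = {x ∈ ℓ¹ : x_k ≥ 0, ‖x‖ ≤ 1} if and only if b ∈ c₀ (i.e. b_k → 0). -/
open Filter Topology

lemma summable_mul_aux {b y : ℕ → ℝ} (M : ℝ) (hb : ∀ k, |b k| ≤ M)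
    (hy : Summable y) (hy0 : ∀ k, 0 ≤ y k) : Summable (fun k => b k * y k) := by
  refine Summable.of_abs ?_
  refine Summable.of_nonneg_of_le (fun k => abs_nonneg _) (fun k => ?_) (hy.mul_left M)
  rw [abs_mul, abs_of_nonneg (hy0 k)]
  exact mul_le_mul_of_nonneg_right (hb k) (hy0 k)

lemma tail_bound_aux {b y : ℕ → ℝ} {M ε : ℝ} (hε : 0 ≤ ε) (N : ℕ)
    (hb : ∀ k, |b k| ≤ M) (hbN : ∀ k ≥ N, |b k| ≤ ε)
    (hy : Summable y) (hy0 : ∀ k, 0 ≤ y k) (hy1 : ∑' k, y k ≤ 1) :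
    |∑' k, b (k + N) * y (k + N)| ≤ ε := by
  have hs : Summable (fun k => b k * y k) := summable_mul_aux M hb hy hy0
  have hs' : Summable (fun k => b (k + N) * y (k + N)) :=
    (summable_nat_add_iff N).2 hs
  have hys : Summable (fun k => y (k + N)) := (summable_nat_add_iff N).2 hy
  have h1 : |∑' k, b (k + N) * y (k + N)| ≤ ∑' k, |b (k + N) * y (k + N)| := by
    simpa [abs_mul] using norm_tsum_le_tsum_norm (f := fun k => b (k + N) * y (k + N)) hs'.abs
  have h2 : ∑' k, |b (k + N) * y (k + N)| ≤ ∑' k, ε * y (k + N) := by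
    refine hs'.abs.tsum_le_tsum (fun k => ?_) (hys.mul_left ε)
    rw [abs_mul, abs_of_nonneg (hy0 _)]
    exact mul_le_mul_of_nonneg_right (hbN _ (Nat.le_add_left N k)) (hy0 _)
  have h3 : ∑' k, ε * y (k + N) = ε * ∑' k, y (k + N) := tsum_mul_left
  have h4 : ∑' k, y (k + N) ≤ 1 := by
    have hd := hy.sum_add_tsum_nat_add N
    have hnn : 0 ≤ ∑ k ∈ Finset.range N, y k :=
      Finset.sum_nonneg fun k _ => hy0 k
    linarith
  have h5 : ε * ∑' k, y (k + N) ≤ ε := by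
    nlinarith [(tsum_nonneg (fun k => hy0 (k + N)) : 0 ≤ ∑' k, y (k + N))]
  linarith

theorem stmt_5 (b : ℕ → ℝ) (hb : ∃ M, ∀ k, |b k| ≤ M) :
    (∀ (x : ℕ → ℕ → ℝ) (a : ℕ → ℝ),
        (∀ n, (∀ k, 0 ≤ x n k) ∧ Summable (x n) ∧ ∑' k, x n k ≤ 1) →
        ((∀ k, 0 ≤ a k) ∧ Summable a ∧ ∑' k, a k ≤ 1) →
        (∀ k, Tendsto (fun n => x n k) atTop (𝓝 (a k))) →
        Tendsto (fun n => ∑' k, b k * x n k) atTop (𝓝 (∑' k, b k * a k)))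
      ↔ Tendsto b atTop (𝓝 0) := by
  obtain ⟨M, hM⟩ := hb
  constructor
  · intro h
    have key := h (fun n k => if k = n then 1 else 0) (fun _ => 0) ?_ ?_ ?_
    · have h1 : ∀ n, ∑' k, b k * (if k = n then (1:ℝ) else 0) = b n := by
        intro n
        rw [tsum_eq_single n]
        · simp
        · intro k hk; simp [hk]
      have h2 : (∑' k : ℕ, b k * (0:ℝ)) = 0 := by simp
      rw [h2] at key
      exact key.congr (fun n => h1 n)
    · intro n
      refine ⟨fun k => by split <;> norm_num, ?_, ?_⟩
      · exact summable_of_ne_finset_zero (s := {n}) (fun k hk => by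
          simp only [Finset.mem_singleton] at hk; simp [hk])
      · rw [tsum_ite_eq]
    · exact ⟨fun k => le_rfl, summable_zero, by simp⟩
    · intro k
      have hev : ∀ᶠ n in atTop, (0:ℝ) = if k = n then 1 else 0 := by
        filter_upwards [eventually_gt_atTop k] with n hn
        simp [Nat.ne_of_lt hn]
      exact tendsto_const_nhds.congr' hev
  · intro hb0 x a hx ha hpt
    rw [Metric.tendsto_atTop]
    intro ε hε
    obtain ⟨N, hN⟩ := (Metric.tendsto_atTop.1 hb0) (ε/4) (by linarith)
    have hbN : ∀ k ≥ N, |b k| ≤ ε/4 := fun k hk => by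
      have := hN k hk; rw [Real.dist_eq, sub_zero] at this; linarith
    have hsx : ∀ n, Summable (fun k => b k * x n k) :=
      fun n => summable_mul_aux M hM (hx n).2.1 (hx n).1
    have hsa : Summable (fun k => b k * a k) := summable_mul_aux M hM ha.2.1 ha.1
    have hdecx : ∀ n, ∑' k, b k * x n k =
        (∑ k ∈ Finset.range N, b k * x n k) + ∑' k, b (k+N) * x n (k+N) :=
      fun n => ((hsx n).sum_add_tsum_nat_add N).symm
    have hdeca : ∑' k, b k * a k =
        (∑ k ∈ Finset.range N, b k * a k) + ∑' k, b (k+N) * a (k+N) :=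
      (hsa.sum_add_tsum_nat_add N).symm
    have hhead : Tendsto (fun n => ∑ k ∈ Finset.range N, b k * x n k) atTop
        (𝓝 (∑ k ∈ Finset.range N, b k * a k)) := by
      apply tendsto_finset_sum
      intro k _
      exact (hpt k).const_mul (b k)
    obtain ⟨N', hN'⟩ := (Metric.tendsto_atTop.1 hhead) (ε/4) (by linarith)
    refine ⟨N', fun n hn => ?_⟩
    have h1 := hN' n hn
    rw [Real.dist_eq] at h1
    have h2 : |∑' k, b (k+N) * x n (k+N)| ≤ ε/4 :=
      tail_bound_aux (by linarith) N hM hbN (hx n).2.1 (hx n).1 (hx n).2.2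
    have h3 : |∑' k, b (k+N) * a (k+N)| ≤ ε/4 :=
      tail_bound_aux (by linarith) N hM hbN ha.2.1 ha.1 ha.2.2
    rw [Real.dist_eq, hdecx n, hdeca, abs_lt]
    have hA := abs_lt.1 h1
    have hB := abs_le.1 h2
    have hC := abs_le.1 h3
    constructor <;> linarith
end

section
/- Let V be a Volterra operator with skew-symmetric matrix (a_{ki}), |a_{ki}| ≤ 1, and let b ∈ ℓ^∞ satisfy b_k a_{ki} ≤ 0 for all pairs (k,i). Then φ_b(V(x)) ≤ φ_b(x) for all x ∈ S, where φ_b(x) = Σ b_k x_k; consequently the sequence n ↦ φ_b(Vⁿ(x)) converges for every x ∈ S. -/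
/-!
The fitness `c k = ∑' i, a k i * x i` of a point `x` of the simplex lies in `[-1, 1]`, so `V x`
stays nonnegative, and skew-symmetry of `a` makes `∑' k, x k * c k` vanish, so `V x` keeps total
mass one. Moreover `φ_b (V x) - φ_b x = ∑' k, ∑' i, b k * a k i * x k * x i ≤ 0`. Along an orbit
`φ_b` is therefore antitone and bounded below by `-sup |b|`, hence convergent.
-/

open Filter Topology

namespace Volterra

def simplex : Set (ℕ → ℝ) := {x | (∀ k, 0 ≤ x k) ∧ Summable x ∧ ∑' k, x k = 1}

noncomputable def operator (a : ℕ → ℕ → ℝ) (x : ℕ → ℝ) (k : ℕ) : ℝ := x k * (1 + ∑' i, a k i * x i)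

lemma summable_mul_of_abs_le {ι : Type*} {c x : ι → ℝ} {C : ℝ} (hc : ∀ k, |c k| ≤ C)
    (hx : Summable x) : Summable fun k => c k * x k :=
  Summable.of_norm_bounded (hx.abs.mul_left C) fun k => by
    rw [Real.norm_eq_abs, abs_mul]
    exact mul_le_mul_of_nonneg_right (hc k) (abs_nonneg _)

lemma abs_tsum_mul_le {c x : ℕ → ℝ} {C : ℝ} (hc : ∀ k, |c k| ≤ C) (hx : x ∈ simplex) :
    |∑' k, c k * x k| ≤ C := by
  obtain ⟨hx0, hxs, hx1⟩ := hx
  have hsum : HasSum (fun k => C * x k) C := by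
    simpa only [tsum_mul_left, hx1, mul_one] using (hxs.mul_left C).hasSum
  have hterm k : ‖c k * x k‖ ≤ C * x k := by
    rw [Real.norm_eq_abs, abs_mul, abs_of_nonneg (hx0 k)]
    exact mul_le_mul_of_nonneg_right (hc k) (hx0 k)
  simpa only [Real.norm_eq_abs] using tsum_of_norm_bounded hsum hterm

lemma tsum_mul_tsum_eq_zero_of_skew {ι : Type*} {a : ι → ι → ℝ} {C : ℝ}
    (hskew : ∀ k i, a k i = -a i k) (hbd : ∀ k i, |a k i| ≤ C) {x : ι → ℝ}
    (hx : Summable x) : ∑' k, x k * ∑' i, a k i * x i = 0 := by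
  set f : ι × ι → ℝ := fun p => a p.1 p.2 * (x p.1 * x p.2)
  have hf : Summable f :=
    summable_mul_of_abs_le (fun p => hbd p.1 p.2) (summable_mul_of_summable_norm hx.norm hx.norm)
  have hswap_neg : ∑' p : ι × ι, f p.swap = -∑' p, f p := by
    rw [← tsum_neg]
    refine tsum_congr fun p => ?_
    simp only [f, Prod.fst_swap, Prod.snd_swap, hskew p.2 p.1]
    ring
  have hswap_eq : ∑' p : ι × ι, f p.swap = ∑' p, f p := (Equiv.prodComm ι ι).tsum_eq f
  calc ∑' k, x k * ∑' i, a k i * x i = ∑' k, ∑' i, f (k, i) := by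
        refine tsum_congr fun k => ?_
        rw [← tsum_mul_left]
        exact tsum_congr fun i => by ring
    _ = 0 := by rw [← hf.tsum_prod]; linarith

variable {a : ℕ → ℕ → ℝ}

lemma abs_tsum_le_one (hbd : ∀ k i, |a k i| ≤ 1) {x : ℕ → ℝ} (hx : x ∈ simplex) (k : ℕ) :
    |∑' i, a k i * x i| ≤ 1 :=
  abs_tsum_mul_le (hbd k) hx

lemma mapsTo_operator_simplex (hskew : ∀ k i, a k i = -a i k) (hbd : ∀ k i, |a k i| ≤ 1) :
    Set.MapsTo (operator a) simplex simplex := by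
  intro x hx
  have hfit_abs := abs_tsum_le_one hbd hx
  have hc k := abs_le.mp (hfit_abs k)
  obtain ⟨hx0, hxs, hx1⟩ := hx
  have hfit : Summable fun k => (∑' i, a k i * x i) * x k := summable_mul_of_abs_le hfit_abs hxs
  refine ⟨fun k => mul_nonneg (hx0 k) (by linarith [hc k]), ?_, ?_⟩
  · refine (summable_mul_of_abs_le (C := 2) (fun k => ?_) hxs).congr fun k => mul_comm _ _
    exact abs_le.mpr ⟨by linarith [hc k], by linarith [hc k]⟩
  · calc ∑' k, operator a x k = ∑' k, (x k + (∑' i, a k i * x i) * x k) :=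
          tsum_congr fun k => by simp only [operator]; ring
      _ = 1 := by
          rw [hxs.tsum_add hfit, hx1, add_eq_left]
          simpa only [mul_comm] using tsum_mul_tsum_eq_zero_of_skew hskew hbd hxs

lemma tsum_mul_operator_le (hbd : ∀ k i, |a k i| ≤ 1) {b : ℕ → ℝ} {M : ℝ}
    (hM : ∀ k, |b k| ≤ M) (hba : ∀ k i, b k * a k i ≤ 0) {x : ℕ → ℝ} (hx : x ∈ simplex) :
    ∑' k, b k * operator a x k ≤ ∑' k, b k * x k := by
  have hc := abs_tsum_le_one hbd hx
  obtain ⟨hx0, hxs, -⟩ := hx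
  have hbc : ∀ k, |b k * ∑' i, a k i * x i| ≤ M := fun k => by
    rw [abs_mul]
    exact (mul_le_of_le_one_right (abs_nonneg _) (hc k)).trans (hM k)
  have hdrift : ∑' k, (b k * ∑' i, a k i * x i) * x k ≤ 0 := by
    refine tsum_nonpos fun k => ?_
    rw [← tsum_mul_left, ← tsum_mul_right]
    exact tsum_nonpos fun i => by
      nlinarith [hba k i, mul_nonneg (hx0 k) (hx0 i)]
  calc ∑' k, b k * operator a x k
      = ∑' k, (b k * x k + (b k * ∑' i, a k i * x i) * x k) :=
        tsum_congr fun k => by simp only [operator]; ring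
    _ = ∑' k, b k * x k + ∑' k, (b k * ∑' i, a k i * x i) * x k :=
        (summable_mul_of_abs_le hM hxs).tsum_add (summable_mul_of_abs_le hbc hxs)
    _ ≤ ∑' k, b k * x k := by linarith

end Volterra

open Volterra in
theorem stmt_9 (a : ℕ → ℕ → ℝ)
    (hskew : ∀ k i, a k i = -a i k) (hbd : ∀ k i, |a k i| ≤ 1)
    (V : (ℕ → ℝ) → (ℕ → ℝ))
    (hV : ∀ x k, V x k = x k * (1 + ∑' i, a k i * x i))
    (b : ℕ → ℝ) (hbdd : ∃ M, ∀ k, |b k| ≤ M)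
    (hba : ∀ k i, b k * a k i ≤ 0) :
    (∀ x : ℕ → ℝ, ((∀ k, 0 ≤ x k) ∧ Summable x ∧ ∑' k, x k = 1) →
        ∑' k, b k * V x k ≤ ∑' k, b k * x k) ∧
    (∀ x : ℕ → ℝ, ((∀ k, 0 ≤ x k) ∧ Summable x ∧ ∑' k, x k = 1) →
        ∃ L, Tendsto (fun n => ∑' k, b k * (V^[n] x) k) atTop (𝓝 L)) := by
  obtain ⟨M, hM⟩ := hbdd
  obtain rfl : V = operator a := funext fun x => funext (hV x)
  have hmono : ∀ x ∈ simplex, ∑' k, b k * operator a x k ≤ ∑' k, b k * x k :=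
    fun x => tsum_mul_operator_le hbd hM hba
  refine ⟨hmono, fun x hx => ?_⟩
  have horbit n : (operator a)^[n] x ∈ simplex := (mapsTo_operator_simplex hskew hbd).iterate n hx
  have hanti : Antitone fun n => ∑' k, b k * ((operator a)^[n] x) k :=
    antitone_nat_of_succ_le fun n => by
      rw [Function.iterate_succ_apply']
      exact hmono _ (horbit n)
  have hbelow n : -M ≤ ∑' k, b k * ((operator a)^[n] x) k :=
    (abs_le.mp (abs_tsum_mul_le hM (horbit n))).1
  exact ⟨_, tendsto_atTop_ciInf hanti ⟨-M, Set.forall_mem_range.mpr hbelow⟩⟩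
end

section
/- Let V be a Volterra operator whose skew-symmetric matrix satisfies a_{ki} ≥ 0 for all k < i (class 𝒱⁺), and let b = (b_k) ∈ ℓ^∞ be nondecreasing (b_k ≤ b_{k+1}). Then φ_b(V(x)) ≤ φ_b(x) for all x ∈ S, so limₙ φ_b(Vⁿ(x)) exists for every x ∈ S. -/
open Filter Topology

theorem stmt_10 (a : ℕ → ℕ → ℝ)
    (hskew : ∀ k i, a k i = -a i k) (hbd : ∀ k i, |a k i| ≤ 1)
    (hpos : ∀ k i, k < i → 0 ≤ a k i)
    (V : (ℕ → ℝ) → (ℕ → ℝ))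
    (hV : ∀ x k, V x k = x k * (1 + ∑' i, a k i * x i))
    (b : ℕ → ℝ) (hbdd : ∃ M, ∀ k, |b k| ≤ M)
    (hmono : ∀ k, b k ≤ b (k + 1)) :
    (∀ x : ℕ → ℝ, ((∀ k, 0 ≤ x k) ∧ Summable x ∧ ∑' k, x k = 1) →
        ∑' k, b k * V x k ≤ ∑' k, b k * x k) ∧
    (∀ x : ℕ → ℝ, ((∀ k, 0 ≤ x k) ∧ Summable x ∧ ∑' k, x k = 1) →
        ∃ L, Tendsto (fun n => ∑' k, b k * (V^[n] x) k) atTop (𝓝 L)) := by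
  obtain ⟨M, hM⟩ := hbdd
  have hM0 : 0 ≤ M := le_trans (abs_nonneg _) (hM 0)
  have hbmono : Monotone b := monotone_nat_of_le_succ hmono
  -- Main lemma: V preserves the simplex and φ_b does not increase.
  have key : ∀ x : ℕ → ℝ, (∀ k, 0 ≤ x k) → Summable x → (∑' k, x k) = 1 →
      ((∀ k, 0 ≤ V x k) ∧ Summable (V x) ∧ (∑' k, V x k) = 1) ∧
      (∑' k, b k * V x k) ≤ ∑' k, b k * x k := by
    intro x hx0 hxs hx1
    have hinner : ∀ k, Summable (fun i => a k i * x i) := by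
      intro k
      apply Summable.of_norm_bounded hxs
      intro i
      rw [Real.norm_eq_abs, abs_mul, abs_of_nonneg (hx0 i)]
      exact mul_le_of_le_one_left (hx0 i) (hbd k i)
    have hs_le : ∀ k, |∑' i, a k i * x i| ≤ 1 := by
      intro k
      calc |∑' i, a k i * x i| ≤ ∑' i, |a k i * x i| := by
            simpa only [Real.norm_eq_abs] using norm_tsum_le_tsum_norm (f := fun i => a k i * x i)
              (by simpa only [Real.norm_eq_abs] using (hinner k).abs)
        _ ≤ ∑' i, x i := by
            apply Summable.tsum_le_tsum _ (hinner k).abs hxs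
            intro i
            rw [abs_mul, abs_of_nonneg (hx0 i)]
            exact mul_le_of_le_one_left (hx0 i) (hbd k i)
        _ = 1 := hx1
    have hxx : Summable (fun p : ℕ × ℕ => x p.1 * x p.2) :=
      hxs.mul_of_nonneg hxs hx0 hx0
    -- generic summability of weighted double sums
    have hsum2 : ∀ (g : ℕ × ℕ → ℝ) (C : ℝ), (∀ p, |g p| ≤ C * (x p.1 * x p.2)) →
        Summable g := by
      intro g C hg
      apply Summable.of_norm_bounded (hxx.mul_left C)
      intro p
      simpa [Real.norm_eq_abs] using hg p
    set F : ℕ × ℕ → ℝ := fun p => (b p.1 * x p.1) * (a p.1 p.2 * x p.2) with hFdef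
    set G : ℕ × ℕ → ℝ := fun p => x p.1 * (a p.1 p.2 * x p.2) with hGdef
    set H : ℕ × ℕ → ℝ := fun p => -((b p.2 * x p.1) * (a p.1 p.2 * x p.2)) with hHdef
    have hFsum : Summable F := by
      apply hsum2 F M
      intro p
      have h1 := hbd p.1 p.2
      have h2 := hM p.1
      have h3 := hx0 p.1
      have h4 := hx0 p.2
      have h5 := abs_nonneg (a p.1 p.2)
      have h6 := abs_nonneg (b p.1)
      simp only [hFdef]
      rw [abs_mul, abs_mul, abs_mul, abs_of_nonneg h3, abs_of_nonneg h4]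
      calc |b p.1| * x p.1 * (|a p.1 p.2| * x p.2) ≤ M * x p.1 * (1 * x p.2) := by
            apply mul_le_mul (mul_le_mul_of_nonneg_right h2 h3)
              (mul_le_mul_of_nonneg_right h1 h4) (mul_nonneg h5 h4) (mul_nonneg hM0 h3)
        _ = M * (x p.1 * x p.2) := by ring
    have hGsum : Summable G := by
      apply hsum2 G 1
      intro p
      have h1 := hbd p.1 p.2
      have h3 := hx0 p.1
      have h4 := hx0 p.2
      have h5 := abs_nonneg (a p.1 p.2)
      simp only [hGdef]
      rw [abs_mul, abs_mul, abs_of_nonneg h3, abs_of_nonneg h4]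
      calc x p.1 * (|a p.1 p.2| * x p.2) ≤ x p.1 * x p.2 :=
            mul_le_mul_of_nonneg_left (mul_le_of_le_one_left h4 h1) h3
        _ = 1 * (x p.1 * x p.2) := (one_mul _).symm
    have hHsum : Summable H := by
      apply hsum2 H M
      intro p
      have h1 := hbd p.1 p.2
      have h2 := hM p.2
      have h3 := hx0 p.1
      have h4 := hx0 p.2
      have h5 := abs_nonneg (a p.1 p.2)
      have h6 := abs_nonneg (b p.2)
      simp only [hHdef]
      rw [abs_neg, abs_mul, abs_mul, abs_mul, abs_of_nonneg h3, abs_of_nonneg h4]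
      calc |b p.2| * x p.1 * (|a p.1 p.2| * x p.2) ≤ M * x p.1 * (1 * x p.2) := by
            apply mul_le_mul (mul_le_mul_of_nonneg_right h2 h3)
              (mul_le_mul_of_nonneg_right h1 h4) (mul_nonneg h5 h4) (mul_nonneg hM0 h3)
        _ = M * (x p.1 * x p.2) := by ring
    -- ∑ G = 0 by skew symmetry
    have hGzero : (∑' p, G p) = 0 := by
      have h1 : (∑' p : ℕ × ℕ, G ((Equiv.prodComm ℕ ℕ) p)) = ∑' p, G p :=
        (Equiv.prodComm ℕ ℕ).tsum_eq G
      have h2 : ∀ p : ℕ × ℕ, G ((Equiv.prodComm ℕ ℕ) p) = -G p := by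
        intro p
        simp only [hGdef, Equiv.prodComm_apply, Prod.fst_swap, Prod.snd_swap]
        rw [hskew p.2 p.1]
        ring
      rw [tsum_congr h2, tsum_neg] at h1
      linarith
    -- ∑ F = ∑ H via the swap
    have hFH : (∑' p, F p) = ∑' p, H p := by
      have h1 : (∑' p : ℕ × ℕ, F ((Equiv.prodComm ℕ ℕ) p)) = ∑' p, F p :=
        (Equiv.prodComm ℕ ℕ).tsum_eq F
      have h2 : ∀ p : ℕ × ℕ, F ((Equiv.prodComm ℕ ℕ) p) = H p := by
        intro p
        simp only [hFdef, hHdef, Equiv.prodComm_apply, Prod.fst_swap, Prod.snd_swap]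
        rw [hskew p.2 p.1]
        ring
      rw [tsum_congr h2] at h1
      exact h1.symm
    -- F + H is pointwise nonpositive
    have hFHle : ∀ p : ℕ × ℕ, F p + H p ≤ 0 := by
      intro p
      have heq : F p + H p = (b p.1 - b p.2) * (x p.1 * (a p.1 p.2 * x p.2)) := by
        simp only [hFdef, hHdef]; ring
      rw [heq]
      rcases lt_trichotomy p.1 p.2 with h | h | h
      · have h1 : b p.1 - b p.2 ≤ 0 := by linarith [hbmono h.le]
        have h2 : 0 ≤ x p.1 * (a p.1 p.2 * x p.2) :=
          mul_nonneg (hx0 _) (mul_nonneg (hpos _ _ h) (hx0 _))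
        exact mul_nonpos_of_nonpos_of_nonneg h1 h2
      · have h0 : a p.1 p.2 = 0 := by
          have := hskew p.1 p.2
          rw [← h] at *
          linarith [hskew p.1 p.1]
        rw [h0]; simp
      · have h1 : 0 ≤ b p.1 - b p.2 := by linarith [hbmono h.le]
        have ha : a p.1 p.2 ≤ 0 := by
          rw [hskew]
          linarith [hpos p.2 p.1 h]
        have h2 : x p.1 * (a p.1 p.2 * x p.2) ≤ 0 :=
          mul_nonpos_of_nonneg_of_nonpos (hx0 _)
            (mul_nonpos_of_nonpos_of_nonneg ha (hx0 _))
        exact mul_nonpos_of_nonneg_of_nonpos h1 h2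
    have hT : (∑' p, F p) ≤ 0 := by
      have hsum : (∑' p, F p) + (∑' p, H p) = ∑' p, (F p + H p) :=
        (Summable.tsum_add hFsum hHsum).symm
      have hle : (∑' p, (F p + H p)) ≤ 0 := tsum_nonpos hFHle
      rw [← hFH] at hsum
      linarith
    -- relating double sums to iterated sums
    have hFiter : (∑' p, F p) = ∑' k, (b k * x k) * ∑' i, a k i * x i := by
      rw [Summable.tsum_prod' hFsum (fun k => (hinner k).mul_left (b k * x k))]
      exact tsum_congr fun k => by simp only [hFdef]; exact tsum_mul_left
    have hGiter : (∑' p, G p) = ∑' k, x k * ∑' i, a k i * x i := by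
      rw [Summable.tsum_prod' hGsum (fun k => (hinner k).mul_left (x k))]
      exact tsum_congr fun k => by simp only [hGdef]; exact tsum_mul_left
    -- summability of the single-index sums
    have hxsG : Summable (fun k => x k * ∑' i, a k i * x i) := by
      apply Summable.of_norm_bounded hxs
      intro k
      rw [Real.norm_eq_abs, abs_mul, abs_of_nonneg (hx0 k)]
      exact mul_le_of_le_one_right (hx0 k) (hs_le k)
    have hbx : Summable (fun k => b k * x k) := by
      apply Summable.of_norm_bounded (hxs.mul_left M)
      intro k
      rw [Real.norm_eq_abs, abs_mul, abs_of_nonneg (hx0 k)]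
      exact mul_le_mul_of_nonneg_right (hM k) (hx0 k)
    have hbxs : Summable (fun k => (b k * x k) * ∑' i, a k i * x i) := by
      apply Summable.of_norm_bounded (hxs.mul_left M)
      intro k
      rw [Real.norm_eq_abs, abs_mul, abs_mul, abs_of_nonneg (hx0 k)]
      calc |b k| * x k * |∑' i, a k i * x i| ≤ |b k| * x k * 1 := by
            apply mul_le_mul_of_nonneg_left (hs_le k)
            exact mul_nonneg (abs_nonneg _) (hx0 k)
        _ = |b k| * x k := by ring
        _ ≤ M * x k := mul_le_mul_of_nonneg_right (hM k) (hx0 k)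
    -- simplex preservation
    have hVx0 : ∀ k, 0 ≤ V x k := by
      intro k
      rw [hV]
      apply mul_nonneg (hx0 k)
      have := hs_le k
      have := abs_le.1 this
      linarith [this.1]
    have hVeq : ∀ k, V x k = x k + x k * ∑' i, a k i * x i := by
      intro k; rw [hV]; ring
    have hVsum : Summable (V x) := by
      have : Summable (fun k => x k + x k * ∑' i, a k i * x i) := hxs.add hxsG
      exact this.congr fun k => (hVeq k).symm
    have hVone : (∑' k, V x k) = 1 := by
      rw [tsum_congr hVeq, Summable.tsum_add hxs hxsG, hx1, ← hGiter, hGzero]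
      ring
    refine ⟨⟨hVx0, hVsum, hVone⟩, ?_⟩
    have hφ : (∑' k, b k * V x k) = (∑' k, b k * x k) + ∑' p, F p := by
      have h1 : ∀ k, b k * V x k = b k * x k + (b k * x k) * ∑' i, a k i * x i := by
        intro k; rw [hV]; ring
      rw [tsum_congr h1, Summable.tsum_add hbx hbxs, hFiter]
    rw [hφ]
    linarith
  constructor
  · rintro x ⟨hx0, hxs, hx1⟩
    exact (key x hx0 hxs hx1).2
  · rintro x ⟨hx0, hxs, hx1⟩
    have hiter : ∀ n, (∀ k, 0 ≤ (V^[n] x) k) ∧ Summable (V^[n] x) ∧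
        (∑' k, (V^[n] x) k) = 1 := by
      intro n
      induction n with
      | zero => exact ⟨hx0, hxs, hx1⟩
      | succ n ih =>
        rw [Function.iterate_succ_apply']
        exact (key _ ih.1 ih.2.1 ih.2.2).1
    set f : ℕ → ℝ := fun n => ∑' k, b k * (V^[n] x) k with hfdef
    have hanti : Antitone f := by
      apply antitone_nat_of_succ_le
      intro n
      have := key (V^[n] x) (hiter n).1 (hiter n).2.1 (hiter n).2.2
      simp only [hfdef]
      rw [Function.iterate_succ_apply']
      exact this.2
    have hbound : ∀ n, -M ≤ f n := by
      intro n
      obtain ⟨hy0, hys, hy1⟩ := hiter n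
      have hby : Summable (fun k => b k * (V^[n] x) k) := by
        apply Summable.of_norm_bounded (hys.mul_left M)
        intro k
        rw [Real.norm_eq_abs, abs_mul, abs_of_nonneg (hy0 k)]
        exact mul_le_mul_of_nonneg_right (hM k) (hy0 k)
      have habs : |f n| ≤ M := by
        calc |f n| ≤ ∑' k, |b k * (V^[n] x) k| := by
              simpa only [Real.norm_eq_abs] using norm_tsum_le_tsum_norm
                (f := fun k => b k * (V^[n] x) k)
                (by simpa only [Real.norm_eq_abs] using hby.abs)
          _ ≤ ∑' k, M * (V^[n] x) k := by
              apply Summable.tsum_le_tsum _ hby.abs (hys.mul_left M)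
              intro k
              rw [abs_mul, abs_of_nonneg (hy0 k)]
              exact mul_le_mul_of_nonneg_right (hM k) (hy0 k)
          _ = M := by rw [tsum_mul_left, hy1, mul_one]
      linarith [abs_le.1 habs |>.1]
    refine ⟨⨅ n, f n, tendsto_atTop_ciInf hanti ?_⟩
    refine ⟨-M, ?_⟩
    rintro _ ⟨n, rfl⟩
    exact hbound n
end

section
/- Let V be a Volterra operator in class 𝒱⁺ (a_{ki} ≥ 0 for k < i) or 𝒱⁻ (a_{ki} ≤ 0 for k < i), and let b ∈ c₀ be a nonincreasing sequence (hence b_k ≥ 0). Then for every x ∈ S, the sequence φ_b(Vⁿ(x)) is monotone (nondecreasing if V ∈ 𝒱⁺, nonincreasing if V ∈ 𝒱⁻), bounded between 0 and b₁, and hence converges. -/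
/-!
Write `φ_c(y) = ∑ c_k y_k`. Expanding `V`, the increment `φ_c(V y) - φ_c(y)` is the quadratic form
`∑_{k,i} c_k a_{ki} y_k y_i`, and symmetrising it with `a_{ik} = -a_{ki}` gives
`½ ∑_{k,i} (c_k - c_i) a_{ki} y_k y_i`. For nonincreasing `c`, every term has the sign of `a_{ki}` for
`k < i`, so `φ_c` increases along orbits of `V ∈ 𝒱⁺` and decreases along orbits of `V ∈ 𝒱⁻`.
With `c = 1` the increment vanishes, so `V` preserves the simplex, on which `0 ≤ φ_b ≤ b₀`;
a bounded monotone sequence converges.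
-/

open Filter Topology

def simplex (ι : Type*) : Set (ι → ℝ) := {y | (∀ k, 0 ≤ y k) ∧ Summable y ∧ ∑' k, y k = 1}

noncomputable def volterra {ι : Type*} (a : ι → ι → ℝ) (y : ι → ℝ) (k : ι) : ℝ := y k * (1 + ∑' i, a k i * y i)

section Volterra

variable {ι : Type*} {a : ι → ι → ℝ} {c y : ι → ℝ} {C : ℝ}

lemma summable_mul_of_abs_le (hc : ∀ k, |c k| ≤ C) (hy0 : ∀ k, 0 ≤ y k) (hys : Summable y) :
    Summable fun k => c k * y k :=
  Summable.of_norm_bounded (hys.mul_left C) fun k => by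
    rw [Real.norm_eq_abs, abs_mul, abs_of_nonneg (hy0 k)]
    exact mul_le_mul_of_nonneg_right (hc k) (hy0 k)

lemma abs_tsum_mul_le (hc : ∀ k, |c k| ≤ C) (hy0 : ∀ k, 0 ≤ y k) (hys : Summable y) :
    |∑' k, c k * y k| ≤ C * ∑' k, y k :=
  tsum_of_norm_bounded (f := fun k => c k * y k) (hys.hasSum.mul_left C) fun k => by
    rw [Real.norm_eq_abs, abs_mul, abs_of_nonneg (hy0 k)]
    exact mul_le_mul_of_nonneg_right (hc k) (hy0 k)

lemma tsum_mul_mem_Icc (hc0 : ∀ k, 0 ≤ c k) (hcC : ∀ k, c k ≤ C) (hy : y ∈ simplex ι) :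
    ∑' k, c k * y k ∈ Set.Icc 0 C := by
  obtain ⟨hy0, hys, hy1⟩ := hy
  refine ⟨tsum_nonneg fun k => mul_nonneg (hc0 k) (hy0 k), ?_⟩
  have hcy : Summable fun k => c k * y k :=
    summable_mul_of_abs_le (fun k => (abs_of_nonneg (hc0 k)).trans_le (hcC k)) hy0 hys
  calc ∑' k, c k * y k ≤ ∑' k, C * y k :=
        hcy.tsum_le_tsum (fun k => mul_le_mul_of_nonneg_right (hcC k) (hy0 k)) (hys.mul_left C)
    _ = C := by rw [tsum_mul_left, hy1, mul_one]

lemma tsum_eq_tsum_add_comp_swap_div_two {F : ι × ι → ℝ} (hF : Summable F) :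
    ∑' p, F p = (∑' p : ι × ι, (F p + F p.swap)) / 2 := by
  have hswap : ∑' p : ι × ι, F p.swap = ∑' p, F p := (Equiv.prodComm ι ι).tsum_eq F
  rw [hF.tsum_add hF.prod_symm, hswap]
  ring

lemma summable_volterra_increment (hbd : ∀ k i, |a k i| ≤ 1) (hc : ∀ k, |c k| ≤ C)
    (hy0 : ∀ k, 0 ≤ y k) (hys : Summable y) :
    Summable fun p : ι × ι => c p.1 * a p.1 p.2 * y p.1 * y p.2 := by
  refine Summable.of_norm_bounded ((hys.mul_of_nonneg hys hy0 hy0).mul_left C) fun p => ?_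
  have hC : 0 ≤ C := (abs_nonneg _).trans (hc p.1)
  rw [Real.norm_eq_abs, abs_mul, abs_mul, abs_mul, abs_of_nonneg (hy0 p.1),
    abs_of_nonneg (hy0 p.2), mul_assoc, ← mul_one C]
  exact mul_le_mul (mul_le_mul (hc p.1) (hbd p.1 p.2) (abs_nonneg _) hC)
    le_rfl (mul_nonneg (hy0 p.1) (hy0 p.2)) (mul_nonneg hC zero_le_one)

lemma tsum_mul_volterra (hbd : ∀ k i, |a k i| ≤ 1) (hc : ∀ k, |c k| ≤ C)
    (hy0 : ∀ k, 0 ≤ y k) (hys : Summable y) :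
    ∑' k, c k * volterra a y k
      = ∑' k, c k * y k + ∑' p : ι × ι, c p.1 * a p.1 p.2 * y p.1 * y p.2 := by
  have hF := summable_volterra_increment hbd hc hy0 hys
  have hrow : ∀ k, c k * volterra a y k = c k * y k + ∑' i, c k * a k i * y k * y i := by
    intro k
    simp only [volterra, mul_assoc, mul_left_comm (a k _), tsum_mul_left]
    ring
  rw [tsum_congr hrow, (summable_mul_of_abs_le hc hy0 hys).tsum_add hF.prod,
    hF.tsum_prod' hF.prod_factor]

lemma volterra_increment_eq (hskew : ∀ k i, a k i = -a i k) (hbd : ∀ k i, |a k i| ≤ 1)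
    (hc : ∀ k, |c k| ≤ C) (hy0 : ∀ k, 0 ≤ y k) (hys : Summable y) :
    ∑' p : ι × ι, c p.1 * a p.1 p.2 * y p.1 * y p.2
      = (∑' p : ι × ι, (c p.1 - c p.2) * a p.1 p.2 * (y p.1 * y p.2)) / 2 := by
  rw [tsum_eq_tsum_add_comp_swap_div_two (summable_volterra_increment hbd hc hy0 hys)]
  congr 2
  ext p
  rw [Prod.fst_swap, Prod.snd_swap, hskew p.2 p.1]
  ring

lemma volterra_mapsTo_simplex (hskew : ∀ k i, a k i = -a i k) (hbd : ∀ k i, |a k i| ≤ 1) :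
    Set.MapsTo (volterra a) (simplex ι) (simplex ι) := by
  rintro y ⟨hy0, hys, hy1⟩
  have hg : ∀ k, |∑' i, a k i * y i| ≤ 1 := fun k => by
    simpa [hy1] using abs_tsum_mul_le (hbd k) hy0 hys
  have hV0 : ∀ k, 0 ≤ volterra a y k := fun k =>
    mul_nonneg (hy0 k) (by linarith [(abs_le.1 (hg k)).1])
  have hVle : ∀ k, volterra a y k ≤ 2 * y k := fun k => by
    rw [volterra, mul_comm 2]
    exact mul_le_mul_of_nonneg_left (by linarith [(abs_le.1 (hg k)).2]) (hy0 k)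
  have hone : ∀ _ : ι, |(1 : ℝ)| ≤ 1 := fun _ => by simp
  have hmass := tsum_mul_volterra hbd hone hy0 hys
  rw [volterra_increment_eq hskew hbd hone hy0 hys] at hmass
  refine ⟨hV0, (hys.mul_left 2).of_nonneg_of_le hV0 hVle, ?_⟩
  simpa [hy1] using hmass

variable [LinearOrder ι]

lemma sub_mul_nonneg_of_antitone (hskew : ∀ k i, a k i = -a i k)
    (hpos : ∀ k i, k < i → 0 ≤ a k i) (hc : Antitone c) (k i : ι) :
    0 ≤ (c k - c i) * a k i := by
  rcases lt_trichotomy k i with h | rfl | h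
  · exact mul_nonneg (sub_nonneg.2 (hc h.le)) (hpos k i h)
  · simp
  · rw [hskew k i]
    exact mul_nonneg_of_nonpos_of_nonpos (sub_nonpos.2 (hc h.le)) (neg_nonpos.2 (hpos i k h))

lemma sub_mul_nonpos_of_antitone (hskew : ∀ k i, a k i = -a i k)
    (hneg : ∀ k i, k < i → a k i ≤ 0) (hc : Antitone c) (k i : ι) :
    (c k - c i) * a k i ≤ 0 := by
  have := sub_mul_nonneg_of_antitone (a := fun k i => -a k i)
    (fun k i => by rw [hskew k i]) (fun k i h => neg_nonneg.2 (hneg k i h)) hc k i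
  simpa only [mul_neg, neg_nonneg] using this

lemma tsum_mul_le_tsum_mul_volterra (hskew : ∀ k i, a k i = -a i k) (hbd : ∀ k i, |a k i| ≤ 1)
    (hpos : ∀ k i, k < i → 0 ≤ a k i) (hc : Antitone c) (hcC : ∀ k, |c k| ≤ C)
    (hy0 : ∀ k, 0 ≤ y k) (hys : Summable y) :
    ∑' k, c k * y k ≤ ∑' k, c k * volterra a y k := by
  rw [tsum_mul_volterra hbd hcC hy0 hys, volterra_increment_eq hskew hbd hcC hy0 hys]
  exact le_add_of_nonneg_right <| div_nonneg (tsum_nonneg fun p =>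
    mul_nonneg (sub_mul_nonneg_of_antitone hskew hpos hc p.1 p.2) (mul_nonneg (hy0 p.1) (hy0 p.2)))
    zero_le_two

lemma tsum_mul_volterra_le_tsum_mul (hskew : ∀ k i, a k i = -a i k) (hbd : ∀ k i, |a k i| ≤ 1)
    (hneg : ∀ k i, k < i → a k i ≤ 0) (hc : Antitone c) (hcC : ∀ k, |c k| ≤ C)
    (hy0 : ∀ k, 0 ≤ y k) (hys : Summable y) :
    ∑' k, c k * volterra a y k ≤ ∑' k, c k * y k := by
  rw [tsum_mul_volterra hbd hcC hy0 hys, volterra_increment_eq hskew hbd hcC hy0 hys]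
  exact add_le_of_nonpos_right <| div_nonpos_of_nonpos_of_nonneg (tsum_nonpos fun p =>
    mul_nonpos_of_nonpos_of_nonneg (sub_mul_nonpos_of_antitone hskew hneg hc p.1 p.2)
      (mul_nonneg (hy0 p.1) (hy0 p.2))) zero_le_two

end Volterra

theorem stmt_11 (a : ℕ → ℕ → ℝ)
    (hskew : ∀ k i, a k i = -a i k) (hbd : ∀ k i, |a k i| ≤ 1)
    (hclass : (∀ k i, k < i → 0 ≤ a k i) ∨ (∀ k i, k < i → a k i ≤ 0))
    (V : (ℕ → ℝ) → (ℕ → ℝ))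
    (hV : ∀ x k, V x k = x k * (1 + ∑' i, a k i * x i))
    (b : ℕ → ℝ) (hb0 : Tendsto b atTop (𝓝 0))
    (hmono : ∀ k, b (k + 1) ≤ b k)
    (x : ℕ → ℝ) (hx : (∀ k, 0 ≤ x k) ∧ Summable x ∧ ∑' k, x k = 1) :
    ((∀ k i, k < i → 0 ≤ a k i) → Monotone (fun n => ∑' k, b k * (V^[n] x) k)) ∧
    ((∀ k i, k < i → a k i ≤ 0) → Antitone (fun n => ∑' k, b k * (V^[n] x) k)) ∧
    (∀ n, 0 ≤ ∑' k, b k * (V^[n] x) k ∧ ∑' k, b k * (V^[n] x) k ≤ b 0) ∧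
    (∃ L, Tendsto (fun n => ∑' k, b k * (V^[n] x) k) atTop (𝓝 L)) := by
  obtain rfl : V = volterra a := funext fun y => funext (hV y)
  have hb : Antitone b := antitone_nat_of_succ_le hmono
  have hb_nonneg : ∀ k, 0 ≤ b k := hb.le_of_tendsto hb0
  have hb_abs : ∀ k, |b k| ≤ b 0 := fun k => (abs_of_nonneg (hb_nonneg k)).trans_le (hb k.zero_le)
  have horbit : ∀ n, (volterra a)^[n] x ∈ simplex ℕ := fun n =>
    (volterra_mapsTo_simplex hskew hbd).iterate n hx
  have hbounds := fun n => tsum_mul_mem_Icc hb_nonneg (fun k => hb k.zero_le) (horbit n)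
  have hup : (∀ k i, k < i → 0 ≤ a k i) →
      Monotone fun n => ∑' k, b k * ((volterra a)^[n] x) k := fun hpos =>
    monotone_nat_of_le_succ fun n => by
      rw [Function.iterate_succ_apply']
      exact tsum_mul_le_tsum_mul_volterra hskew hbd hpos hb hb_abs (horbit n).1 (horbit n).2.1
  have hdown : (∀ k i, k < i → a k i ≤ 0) →
      Antitone fun n => ∑' k, b k * ((volterra a)^[n] x) k := fun hneg =>
    antitone_nat_of_succ_le fun n => by
      rw [Function.iterate_succ_apply']
      exact tsum_mul_volterra_le_tsum_mul hskew hbd hneg hb hb_abs (horbit n).1 (horbit n).2.1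
  refine ⟨hup, hdown, hbounds, ?_⟩
  rcases hclass with hpos | hneg
  · exact ⟨_, tendsto_atTop_ciSup (hup hpos) ⟨b 0, by rintro _ ⟨n, rfl⟩; exact (hbounds n).2⟩⟩
  · exact ⟨_, tendsto_atTop_ciInf (hdown hneg) ⟨0, by rintro _ ⟨n, rfl⟩; exact (hbounds n).1⟩⟩
end

section
/- Let V be the Volterra operator on S with a_{ki} = −1 for all i > k, i.e. (V(x))₁ = x₁² and (V(x))_k = x_k² + 2x_k Σ_{i<k} x_i for k ≥ 2. Then for all m, n ∈ ℕ and x ∈ S: Σ_{k=1}^m (Vⁿ(x))_k = (Σ_{k=1}^m x_k)^{2ⁿ}. -/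
/-! The partial sum of `V x` up to `m` is the square of the corresponding partial sum of `x`
(expand `(s + y)² = s² + y² + 2 y s` one term at a time), so iterating `n` times raises it
to the power `2ⁿ`. -/

open Finset

theorem sq_sum_range_eq_sum_range {R : Type*} [CommSemiring R] (y : ℕ → R) (m : ℕ) :
    (∑ k ∈ range m, y k) ^ 2 = ∑ k ∈ range m, (y k ^ 2 + 2 * y k * ∑ i ∈ range k, y i) := by
  induction m with
  | zero => simp
  | succ m ih => rw [sum_range_succ, sum_range_succ, ← ih]; ring

theorem apply_iterate_eq_pow_two_pow {α R : Type*} [Monoid R] {V : α → α} (f : α → R)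
    (hV : ∀ x, f (V x) = f x ^ 2) (x : α) (n : ℕ) :
    f (V^[n] x) = f x ^ 2 ^ n := by
  induction n with
  | zero => simp
  | succ n ih => rw [Function.iterate_succ_apply', hV, ih, ← pow_mul, pow_succ]

theorem stmt_12_general (V : (ℕ → ℝ) → (ℕ → ℝ))
    (hV : ∀ x k, V x k = x k ^ 2 + 2 * x k * ∑ i ∈ Finset.range k, x i)
    (x : ℕ → ℝ) :
    ∀ m n : ℕ, ∑ k ∈ Finset.range m, (V^[n] x) k =
      (∑ k ∈ Finset.range m, x k) ^ (2 ^ n) := by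
  intro m n
  refine apply_iterate_eq_pow_two_pow (fun y => ∑ k ∈ range m, y k) (fun y => ?_) x n
  simp only [hV, sq_sum_range_eq_sum_range]

theorem stmt_12 (V : (ℕ → ℝ) → (ℕ → ℝ))
    (hV : ∀ x k, V x k = x k ^ 2 + 2 * x k * ∑ i ∈ Finset.range k, x i)
    (x : ℕ → ℝ) (hx : (∀ k, 0 ≤ x k) ∧ Summable x ∧ ∑' k, x k = 1) :
    ∀ m n : ℕ, ∑ k ∈ Finset.range m, (V^[n] x) k =
      (∑ k ∈ Finset.range m, x k) ^ (2 ^ n) :=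
  stmt_12_general V hV x
end

section
/- Let V be the Volterra operator on S with a_{ki} = −1 for all i > k. If x ∈ S has finite support with maximum element m₀, then Vⁿ(x) converges in ℓ¹-norm to the basis vector e_{m₀}. -/
/-! The partial sums `S_k y = ∑_{i<k} y i` satisfy `S_k (V y) = (S_k y)²`, so
`S_k (Vⁿ x) = (S_k x)^(2ⁿ)`. For `x` supported in `[0, m₀]` with total mass one, `S_k x = 1`
for `k > m₀`, and the `ℓ¹` distance from `Vⁿ x` to `e_{m₀}` telescopes to `2 (S_{m₀} x)^(2ⁿ)`,
which tends to `0` because `S_{m₀} x = 1 - x m₀ < 1`. -/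

open Filter Topology Finset

theorem sum_range_volterra {V : (ℕ → ℝ) → ℕ → ℝ}
    (hV : ∀ x k, V x k = x k ^ 2 + 2 * x k * ∑ i ∈ range k, x i) (y : ℕ → ℝ) (k : ℕ) :
    ∑ i ∈ range k, V y i = (∑ i ∈ range k, y i) ^ 2 := by
  induction k with
  | zero => simp
  | succ k ih => rw [sum_range_succ, ih, hV, sum_range_succ]; ring

theorem sum_range_iterate_volterra {V : (ℕ → ℝ) → ℕ → ℝ}
    (hV : ∀ x k, V x k = x k ^ 2 + 2 * x k * ∑ i ∈ range k, x i) (n : ℕ)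
    (y : ℕ → ℝ) (k : ℕ) :
    ∑ i ∈ range k, V^[n] y i = (∑ i ∈ range k, y i) ^ 2 ^ n := by
  induction n with
  | zero => simp
  | succ n ih => rw [Function.iterate_succ_apply', sum_range_volterra hV, ih, ← pow_mul, pow_succ]

theorem iterate_volterra_apply {V : (ℕ → ℝ) → ℕ → ℝ}
    (hV : ∀ x k, V x k = x k ^ 2 + 2 * x k * ∑ i ∈ range k, x i) (n : ℕ)
    (y : ℕ → ℝ) (k : ℕ) :
    V^[n] y k = (∑ i ∈ range (k + 1), y i) ^ 2 ^ n - (∑ i ∈ range k, y i) ^ 2 ^ n := by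
  rw [← sum_range_iterate_volterra hV, ← sum_range_iterate_volterra hV, sum_range_succ]
  ring

theorem tsum_abs_sub_sub_ite_eq_two_mul {s : ℕ → ℝ} {m : ℕ} (hs : Monotone s) (h0 : s 0 = 0)
    (h1 : ∀ k, m < k → s k = 1) :
    ∑' k, |s (k + 1) - s k - if k = m then 1 else 0| = 2 * s m := by
  have htail : ∀ k ∉ range (m + 1), |s (k + 1) - s k - if k = m then 1 else 0| = 0 := by
    intro k hk
    rw [mem_range, not_lt] at hk
    rw [h1 k (by omega), h1 (k + 1) (by omega), if_neg (by omega)]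
    simp
  have hinit : ∑ k ∈ range m, |s (k + 1) - s k - if k = m then 1 else 0| = s m - s 0 := by
    rw [← sum_range_sub]
    refine sum_congr rfl fun k hk => ?_
    rw [if_neg (mem_range.1 hk).ne, sub_zero, abs_of_nonneg (sub_nonneg.2 (hs k.le_succ))]
  have hs_nonneg : 0 ≤ s m := h0 ▸ hs (Nat.zero_le m)
  rw [tsum_eq_sum htail, sum_range_succ, hinit, if_pos rfl, h1 (m + 1) m.lt_succ_self, h0,
    show 1 - s m - 1 = -s m by ring, abs_neg, abs_of_nonneg hs_nonneg]
  ring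

theorem stmt_14 (V : (ℕ → ℝ) → (ℕ → ℝ))
    (hV : ∀ x k, V x k = x k ^ 2 + 2 * x k * ∑ i ∈ Finset.range k, x i)
    (x : ℕ → ℝ) (hx : (∀ k, 0 ≤ x k) ∧ Summable x ∧ ∑' k, x k = 1)
    (m₀ : ℕ) (hm₀ : x m₀ ≠ 0) (hmax : ∀ i, x i ≠ 0 → i ≤ m₀) :
    Tendsto (fun n => ∑' k, |(V^[n] x) k - (if k = m₀ then (1 : ℝ) else 0)|)
      atTop (𝓝 0) := by
  obtain ⟨hpos, -, htot⟩ := hx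
  set S : ℕ → ℝ := fun k => ∑ i ∈ range k, x i with hS
  have hS_nonneg (k : ℕ) : 0 ≤ S k := sum_nonneg fun i _ => hpos i
  have hS_mono : Monotone S :=
    monotone_nat_of_le_succ fun k => by
      simp only [hS, sum_range_succ, le_add_iff_nonneg_right, hpos]
  have hS_one (k : ℕ) (hk : m₀ < k) : S k = 1 := by
    rw [← htot, tsum_eq_sum fun i hi => ?_]
    by_contra h
    have := hmax i h
    rw [mem_range] at hi
    omega
  have hS_lt : S m₀ < 1 := by
    have : S (m₀ + 1) = S m₀ + x m₀ := sum_range_succ x m₀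
    linarith [hS_one (m₀ + 1) m₀.lt_succ_self, (hpos m₀).lt_of_ne' hm₀]
  have hdist (n : ℕ) :
      ∑' k, |(V^[n] x) k - (if k = m₀ then (1 : ℝ) else 0)| = 2 * S m₀ ^ 2 ^ n := by
    simp only [iterate_volterra_apply hV]
    exact tsum_abs_sub_sub_ite_eq_two_mul (s := fun k => S k ^ 2 ^ n)
      (fun a b hab => pow_le_pow_left₀ (hS_nonneg a) (hS_mono hab) _) (by simp [hS])
      fun k hk => by simp only [hS_one k hk, one_pow]
  simp only [hdist]
  simpa using ((tendsto_pow_atTop_nhds_zero_of_lt_one (hS_nonneg m₀) hS_lt).comp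
    (tendsto_pow_atTop_atTop_of_one_lt one_lt_two)).const_mul 2
end

section
/- Let V be the Volterra operator on S with a_{ki} = −1 for all i > k, and let x₀ ∈ S have infinite support. Then the Cesàro averages (1/n) Σ_{k=0}^{n−1} V^k(x₀) do not converge in ℓ¹-norm to any element of S (V is not ergodic at x₀), although they converge pointwise to 0. -/
open Filter Topology

theorem stmt_15 (V : (ℕ → ℝ) → (ℕ → ℝ))
    (hV : ∀ x k, V x k = x k ^ 2 + 2 * x k * ∑ i ∈ Finset.range k, x i)
    (x₀ : ℕ → ℝ) (hx : (∀ k, 0 ≤ x₀ k) ∧ Summable x₀ ∧ ∑' k, x₀ k = 1)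
    (hsupp : {i | x₀ i ≠ 0}.Infinite) :
    (¬∃ a : ℕ → ℝ, ((∀ k, 0 ≤ a k) ∧ Summable a ∧ ∑' k, a k = 1) ∧
        Tendsto (fun n : ℕ => ∑' k, |(1 / (n : ℝ)) * ∑ j ∈ Finset.range n, (V^[j] x₀) k - a k|)
          atTop (𝓝 0)) ∧
    (∀ k, Tendsto (fun n : ℕ => (1 / (n : ℝ)) * ∑ j ∈ Finset.range n, (V^[j] x₀) k)
        atTop (𝓝 0)) := by
  obtain ⟨hpos, hsum, htsum⟩ := hx
  -- partial sums square under V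
  have hVsum : ∀ (x : ℕ → ℝ) (k : ℕ),
      (∑ i ∈ Finset.range k, V x i) = (∑ i ∈ Finset.range k, x i) ^ 2 := by
    intro x k
    induction k with
    | zero => simp
    | succ k ih =>
      rw [Finset.sum_range_succ, Finset.sum_range_succ, ih, hV]
      ring
  have key : ∀ j k, (∑ i ∈ Finset.range k, V^[j] x₀ i)
      = (∑ i ∈ Finset.range k, x₀ i) ^ (2 ^ j) := by
    intro j
    induction j with
    | zero => simp
    | succ j ih =>
      intro k
      rw [Function.iterate_succ_apply', hVsum, ih, ← pow_mul, ← pow_succ]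
  have hnn : ∀ j k, 0 ≤ V^[j] x₀ k := by
    intro j
    induction j with
    | zero => exact hpos
    | succ j ih =>
      intro k
      rw [Function.iterate_succ_apply', hV]
      have h1 := ih k
      have h2 : 0 ≤ ∑ i ∈ Finset.range k, V^[j] x₀ i :=
        Finset.sum_nonneg fun i _ => ih i
      positivity
  have hS0 : ∀ k, (0 : ℝ) ≤ ∑ i ∈ Finset.range k, x₀ i :=
    fun k => Finset.sum_nonneg fun i _ => hpos i
  have hlt1 : ∀ k, (∑ i ∈ Finset.range k, x₀ i) < 1 := by
    intro k
    obtain ⟨m, hm, hmk⟩ := hsupp.exists_notMem_finset (Finset.range k)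
    have hle : ∑ i ∈ insert m (Finset.range k), x₀ i ≤ 1 := by
      rw [← htsum]
      exact Summable.sum_le_tsum _ (fun i _ => hpos i) hsum
    rw [Finset.sum_insert hmk] at hle
    have hmpos : 0 < x₀ m := lt_of_le_of_ne (hpos m) (Ne.symm hm)
    linarith
  -- each coordinate of iterates tends to 0
  have tendc : ∀ m, Tendsto (fun j : ℕ => (∑ i ∈ Finset.range m, x₀ i) ^ (2 ^ j))
      atTop (𝓝 0) :=
    fun m => (tendsto_pow_atTop_nhds_zero_of_lt_one (hS0 m) (hlt1 m)).comp
      (tendsto_pow_atTop_atTop_of_one_lt one_lt_two)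
  have hcoord : ∀ k, Tendsto (fun j : ℕ => V^[j] x₀ k) atTop (𝓝 0) := by
    intro k
    have hrepr : ∀ j, V^[j] x₀ k
        = (∑ i ∈ Finset.range (k + 1), x₀ i) ^ (2 ^ j)
          - (∑ i ∈ Finset.range k, x₀ i) ^ (2 ^ j) := by
      intro j
      have h1 := key j (k + 1)
      have h2 := key j k
      rw [Finset.sum_range_succ] at h1
      linarith
    have := (tendc (k + 1)).sub (tendc k)
    simp only [sub_zero] at this
    simpa [hrepr] using this
  -- Cesàro: averages tend to 0 pointwise
  have cesaro : ∀ k, Tendsto (fun n : ℕ => (1 / (n : ℝ)) *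
      ∑ j ∈ Finset.range n, (V^[j] x₀) k) atTop (𝓝 0) := by
    intro k
    have := (hcoord k).cesaro
    simpa [one_div] using this
  -- summability of iterates
  have hsummable : ∀ j, Summable (V^[j] x₀) := by
    intro j
    apply summable_of_sum_range_le (c := 1) (hnn j)
    intro n
    rw [key]
    exact pow_le_one₀ (hS0 n) (hlt1 n).le
  refine ⟨?_, cesaro⟩
  rintro ⟨a, ⟨hanon, hasum, hatsum⟩, hconv⟩
  have hak : ∀ k, a k = 0 := by
    intro k
    have havg_sum : ∀ n : ℕ,
        Summable (fun k => (1 / (n : ℝ)) * ∑ j ∈ Finset.range n, (V^[j] x₀) k) := by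
      intro n
      exact (summable_sum (fun j _ => hsummable j)).mul_left _
    have hdiff : ∀ n : ℕ, Summable (fun k =>
        |(1 / (n : ℝ)) * ∑ j ∈ Finset.range n, (V^[j] x₀) k - a k|) :=
      fun n => ((havg_sum n).sub hasum).abs
    have hzero : Tendsto (fun n : ℕ =>
        (1 / (n : ℝ)) * ∑ j ∈ Finset.range n, (V^[j] x₀) k - a k) atTop (𝓝 0) := by
      apply squeeze_zero_norm (a := fun n : ℕ =>
          ∑' k, |(1 / (n : ℝ)) * ∑ j ∈ Finset.range n, (V^[j] x₀) k - a k|) ?_ hconv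
      intro n
      rw [Real.norm_eq_abs]
      exact Summable.le_tsum (hdiff n) k (fun i _ => abs_nonneg _)
    have := (cesaro k).sub hzero
    simp only [sub_sub_cancel, sub_zero] at this
    exact (tendsto_nhds_unique tendsto_const_nhds this)
  have : (∑' k, a k) = 0 := by simp [hak]
  rw [hatsum] at this
  exact one_ne_zero this
end

section
/- Let V be a Volterra operator with a_{ki} < 0 for all k < i. If x ∈ S has finite support with maximum m₀, then Vⁿ(x) converges in ℓ¹-norm to e_{m₀}. -/
/-!
Every iterate stays in the simplex on the coordinates `0, …, m₀`, because skew-symmetry makes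
`V` preserve the total mass and `|a k i| ≤ 1` keeps the coordinates nonnegative. The top
coordinate evolves by `y_{m₀} ↦ y_{m₀} (1 + s)` with `s = ∑_{i < m₀} a_{m₀ i} y_i ≥ 0`, so it
increases and is bounded by `1`; hence it converges to a positive limit and the growth rate `s`
tends to `0`. As `a_{m₀ i} > 0` for `i < m₀`, every lower coordinate tends to `0`, and the
`ℓ¹`-distance to `e_{m₀}` is twice their sum.
-/

open Filter Topology Finset Set

noncomputable def volterraMap (a : ℕ → ℕ → ℝ) (x : ℕ → ℝ) : ℕ → ℝ :=
  fun k => x k * (1 + ∑' i, a k i * x i)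

def simplexUpTo (N : ℕ) : Set (ℕ → ℝ) :=
  {z | (∀ k, 0 ≤ z k) ∧ (∀ k, N < k → z k = 0) ∧ ∑ k ∈ range (N + 1), z k = 1}

theorem tsum_eq_sum_range_of_forall_gt {N : ℕ} {f : ℕ → ℝ} (hf : ∀ k, N < k → f k = 0) :
    ∑' k, f k = ∑ k ∈ range (N + 1), f k :=
  tsum_eq_sum fun k hk => hf k (by simp only [Finset.mem_range] at hk; omega)

theorem sum_sum_skew_mul_eq_zero {ι : Type*} (s : Finset ι) {a : ι → ι → ℝ}
    (hskew : ∀ k i, a k i = -a i k) (z : ι → ℝ) :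
    ∑ k ∈ s, ∑ i ∈ s, a k i * z k * z i = 0 := by
  have h : ∑ k ∈ s, ∑ i ∈ s, a k i * z k * z i = -∑ i ∈ s, ∑ k ∈ s, a i k * z i * z k := by
    rw [← sum_neg_distrib, sum_comm]
    refine sum_congr rfl fun i _ => ?_
    rw [← sum_neg_distrib]
    exact sum_congr rfl fun k _ => by rw [hskew k i]; ring
  linarith

section Volterra

variable {a : ℕ → ℕ → ℝ} {N : ℕ} {z : ℕ → ℝ}

theorem volterraMap_apply_of_mem (hz : z ∈ simplexUpTo N) (k : ℕ) :
    volterraMap a z k = z k * (1 + ∑ i ∈ range (N + 1), a k i * z i) := by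
  rw [volterraMap, tsum_eq_sum_range_of_forall_gt fun i hi => by rw [hz.2.1 i hi, mul_zero]]

theorem volterraMap_apply_self_of_mem (hdiag : a N N = 0) (hz : z ∈ simplexUpTo N) :
    volterraMap a z N = z N * (1 + ∑ i ∈ range N, a N i * z i) := by
  rw [volterraMap_apply_of_mem hz, sum_range_succ, hdiag, zero_mul, add_zero]

theorem abs_sum_mul_le_one (hbd : ∀ k i, |a k i| ≤ 1) (hz : z ∈ simplexUpTo N) (k : ℕ) :
    |∑ i ∈ range (N + 1), a k i * z i| ≤ 1 :=
  calc |∑ i ∈ range (N + 1), a k i * z i|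
      ≤ ∑ i ∈ range (N + 1), |a k i * z i| := abs_sum_le_sum_abs _ _
    _ ≤ ∑ i ∈ range (N + 1), z i := sum_le_sum fun i _ => by
        rw [abs_mul, abs_of_nonneg (hz.1 i)]
        exact mul_le_of_le_one_left (hz.1 i) (hbd k i)
    _ = 1 := hz.2.2

theorem mapsTo_volterraMap (hskew : ∀ k i, a k i = -a i k) (hbd : ∀ k i, |a k i| ≤ 1) (N : ℕ) :
    MapsTo (volterraMap a) (simplexUpTo N) (simplexUpTo N) := by
  intro z hz
  refine ⟨fun k => ?_, fun k hk => ?_, ?_⟩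
  · rw [volterraMap_apply_of_mem hz]
    have := (abs_le.1 (abs_sum_mul_le_one hbd hz k)).1
    exact mul_nonneg (hz.1 k) (by linarith)
  · rw [volterraMap_apply_of_mem hz, hz.2.1 k hk, zero_mul]
  · calc ∑ k ∈ range (N + 1), volterraMap a z k
        = ∑ k ∈ range (N + 1), (z k + ∑ i ∈ range (N + 1), a k i * z k * z i) :=
          sum_congr rfl fun k _ => by
            rw [volterraMap_apply_of_mem hz, mul_add, mul_one, mul_sum]
            exact congrArg _ (sum_congr rfl fun i _ => by ring)
      _ = 1 := by rw [sum_add_distrib, hz.2.2, sum_sum_skew_mul_eq_zero _ hskew, add_zero]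

theorem tsum_abs_sub_ite_eq_of_mem (hz : z ∈ simplexUpTo N) :
    ∑' k, |z k - (if k = N then (1 : ℝ) else 0)| = 2 * ∑ i ∈ range N, z i := by
  have hlow : ∀ k ∈ range N, |z k - (if k = N then (1 : ℝ) else 0)| = z k := fun k hk => by
    rw [if_neg (Finset.mem_range.1 hk).ne, sub_zero, abs_of_nonneg (hz.1 k)]
  have htop : z N = 1 - ∑ i ∈ range N, z i := by
    linarith [sum_range_succ z N ▸ hz.2.2]
  have hle : z N ≤ 1 := hz.2.2 ▸ single_le_sum (fun k _ => hz.1 k) (self_mem_range_succ N)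
  rw [tsum_eq_sum_range_of_forall_gt fun k hk => by
      rw [hz.2.1 k hk, if_neg hk.ne', sub_zero, abs_zero],
    sum_range_succ, sum_congr rfl hlow, if_pos rfl, abs_of_nonpos (by linarith), htop]
  ring

end Volterra

theorem tendsto_zero_of_eq_mul_one_add_of_bddAbove {u s : ℕ → ℝ}
    (hu : ∀ n, u (n + 1) = u n * (1 + s n)) (hs : ∀ n, 0 ≤ s n) (h0 : 0 < u 0)
    (hbdd : BddAbove (range u)) : Tendsto s atTop (𝓝 0) := by
  have hpos : ∀ n, 0 < u n := fun n => by
    induction n with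
    | zero => exact h0
    | succ n ih => rw [hu]; have := hs n; positivity
  have hmono : Monotone u := monotone_nat_of_le_succ fun n => by
    rw [hu]; nlinarith [hpos n, hs n]
  have hlim := tendsto_atTop_ciSup hmono hbdd
  have hL : 0 < ⨆ n, u n := h0.trans_le (le_ciSup hbdd 0)
  have hratio := (((tendsto_add_atTop_iff_nat 1).2 hlim).div hlim hL.ne').sub_const 1
  rw [div_self hL.ne', sub_self] at hratio
  refine hratio.congr fun n => ?_
  rw [Pi.div_apply, hu, mul_div_cancel_left₀ _ (hpos n).ne']
  ring

theorem tendsto_iterate_volterraMap_apply_of_lt {a : ℕ → ℕ → ℝ}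
    (hskew : ∀ k i, a k i = -a i k) (hbd : ∀ k i, |a k i| ≤ 1) {N : ℕ}
    (hpos : ∀ i < N, 0 < a N i) {x : ℕ → ℝ} (hx : x ∈ simplexUpTo N) (hxN : 0 < x N)
    {i : ℕ} (hi : i < N) :
    Tendsto (fun n => (volterraMap a)^[n] x i) atTop (𝓝 0) := by
  set y : ℕ → ℕ → ℝ := fun n => (volterraMap a)^[n] x
  have hy : ∀ n, y n ∈ simplexUpTo N := fun n => (mapsTo_volterraMap hskew hbd N).iterate n hx
  have hterm : ∀ n, ∀ j ∈ range N, 0 ≤ a N j * y n j := fun n j hj =>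
    mul_nonneg (hpos j (Finset.mem_range.1 hj)).le ((hy n).1 j)
  have hdiag : a N N = 0 := by linarith [hskew N N]
  have hrate : Tendsto (fun n => ∑ j ∈ range N, a N j * y n j) atTop (𝓝 0) := by
    refine tendsto_zero_of_eq_mul_one_add_of_bddAbove (u := fun n => y n N) (fun n => ?_)
      (fun n => sum_nonneg (hterm n)) hxN ⟨1, ?_⟩
    · simp only [y, Function.iterate_succ_apply']
      exact volterraMap_apply_self_of_mem hdiag (hy n)
    · rintro _ ⟨n, rfl⟩
      exact (hy n).2.2 ▸ single_le_sum (fun k _ => (hy n).1 k) (self_mem_range_succ N)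
  have hcoord : Tendsto (fun n => a N i * y n i) atTop (𝓝 0) :=
    squeeze_zero (fun n => hterm n i (Finset.mem_range.2 hi))
      (fun n => single_le_sum (hterm n) (Finset.mem_range.2 hi)) hrate
  simpa [(hpos i hi).ne'] using hcoord.const_mul (a N i)⁻¹

theorem stmt_18 (a : ℕ → ℕ → ℝ)
    (hskew : ∀ k i, a k i = -a i k) (hbd : ∀ k i, |a k i| ≤ 1)
    (hneg : ∀ k i, k < i → a k i < 0)
    (V : (ℕ → ℝ) → (ℕ → ℝ))
    (hV : ∀ x k, V x k = x k * (1 + ∑' i, a k i * x i))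
    (x : ℕ → ℝ) (hx : (∀ k, 0 ≤ x k) ∧ Summable x ∧ ∑' k, x k = 1)
    (m₀ : ℕ) (hm₀ : x m₀ ≠ 0) (hmax : ∀ i, x i ≠ 0 → i ≤ m₀) :
    Tendsto (fun n => ∑' k, |(V^[n] x) k - (if k = m₀ then (1 : ℝ) else 0)|)
      atTop (𝓝 0) := by
  obtain ⟨hx0, -, hx1⟩ := hx
  obtain rfl : V = volterraMap a := funext fun z => funext (hV z)
  have hsupp : ∀ k, m₀ < k → x k = 0 := fun k hk => by_contra fun h => (hmax k h).not_gt hk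
  have hxmem : x ∈ simplexUpTo m₀ :=
    ⟨hx0, hsupp, hx1 ▸ (tsum_eq_sum_range_of_forall_gt hsupp).symm⟩
  have hpos : ∀ i < m₀, 0 < a m₀ i := fun i hi => by linarith [hneg i m₀ hi, hskew m₀ i]
  have hlow := tendsto_finsetSum (range m₀) fun i hi =>
    tendsto_iterate_volterraMap_apply_of_lt hskew hbd hpos hxmem
      ((hx0 m₀).lt_of_ne' hm₀) (Finset.mem_range.1 hi)
  simpa only [tsum_abs_sub_ite_eq_of_mem ((mapsTo_volterraMap hskew hbd m₀).iterate _ hxmem),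
    sum_const_zero, mul_zero] using hlow.const_mul 2
end
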